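/- arXiv:1802.01831 — 2 statements merged into one kernel-verified Lean document; each statement's English description precedes it below -/
import Mathlib

section
/- For every real number s > 1 and every integer i ≥ 1, one has ∑_{k=1}^∞ (log k)^i / k^s ≤ (i! / (s−1)^i) · ζ(s), where ζ is the Riemann zeta function. -/
/-!
For `x ≥ 1` the function `f x = (log x)^i / x^s` increases up to `e^{i/s}` and decreases
afterwards, so comparing the sum with the integral costs at most one value of `f` at its peak:
`∑ f k ≤ ∫₁^∞ f + f (e^{i/s})`. The substitution `x = e^u` turns the integral into the Gamma
integral `i! / (s-1)^{i+1}`, and Stirling's bound `2 (i/e)^i ≤ i!` gives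
`f (e^{i/s}) = (i / (e s))^i ≤ i! / (2 (s-1)^i)`. Together this is `i! / (s-1)^i · (1/(s-1) + 1/2)`,
and `1/(s-1) + 1/2 ≤ ζ(s)` is the trapezoid inequality for the convex function `x^{-s}`.
-/

open Real MeasureTheory Set Filter
open scoped Nat

section UnimodalSum

variable {f : ℝ → ℝ}

theorem intervalIntegrable_of_monotoneOn_antitoneOn {x c y : ℝ} (hxc : x ≤ c) (hcy : c ≤ y)
    (hmono : MonotoneOn f (Icc x c)) (hanti : AntitoneOn f (Icc c y)) :
    IntervalIntegrable f volume x y :=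
  (MonotoneOn.intervalIntegrable (by rwa [uIcc_of_le hxc])).trans
    (AntitoneOn.intervalIntegrable (by rwa [uIcc_of_le hcy]))

theorem add_le_integral_add_of_monotoneOn_antitoneOn {b c : ℝ} (hbc : b ≤ c) (hcb : c ≤ b + 1)
    (hmono : MonotoneOn f (Icc b c)) (hanti : AntitoneOn f (Icc c (b + 1))) :
    f b + f (b + 1) ≤ (∫ x in b..b + 1, f x) + f c := by
  have hint_left : IntervalIntegrable f volume b c :=
    MonotoneOn.intervalIntegrable (by rwa [uIcc_of_le hbc])
  have hint_right : IntervalIntegrable f volume c (b + 1) :=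
    AntitoneOn.intervalIntegrable (by rwa [uIcc_of_le hcb])
  have hleft : f b * (c - b) ≤ ∫ x in b..c, f x := by
    simpa [mul_comm] using intervalIntegral.integral_mono_on hbc intervalIntegrable_const
      hint_left fun x hx => hmono ⟨le_rfl, hbc⟩ hx hx.1
  have hright : f (b + 1) * (b + 1 - c) ≤ ∫ x in c..b + 1, f x := by
    simpa [mul_comm] using intervalIntegral.integral_mono_on hcb intervalIntegrable_const
      hint_right fun x hx => hanti hx ⟨hcb, le_rfl⟩ hx.2
  have hfb : f b ≤ f c := hmono ⟨le_rfl, hbc⟩ ⟨hbc, le_rfl⟩ hbc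
  have hfb1 : f (b + 1) ≤ f c := hanti ⟨le_rfl, hcb⟩ ⟨hcb, le_rfl⟩ hcb
  rw [← intervalIntegral.integral_add_adjacent_intervals hint_left hint_right]
  -- what is left over, `f b * (b + 1 - c) + f (b + 1) * (c - b)`, is a convex combination
  -- of two values below `f c`
  nlinarith

theorem sum_range_le_integral_add_of_monotoneOn_antitoneOn {a c : ℝ} {N : ℕ} (hN : N + a ≤ c)
    (hN' : c ≤ N + a + 1) (hmono : MonotoneOn f (Icc a c)) (hanti : AntitoneOn f (Ici c))
    (m : ℕ) :
    ∑ k ∈ Finset.range (N + 2 + m), f (k + a) ≤ (∫ x in a..N + a + 1 + m, f x) + f c := by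
  have hmono_left : MonotoneOn f (Icc a (a + N)) :=
    hmono.mono (Icc_subset_Icc_right (by linarith))
  have hmono_mid : MonotoneOn f (Icc (N + a) c) := hmono.mono (Icc_subset_Icc_left (by simp))
  have hanti_mid : AntitoneOn f (Icc c (N + a + 1)) := hanti.mono Icc_subset_Ici_self
  have hanti_right : AntitoneOn f (Icc (N + a + 1) (N + a + 1 + m)) :=
    hanti.mono fun x hx => hN'.trans hx.1
  have hleft : ∑ k ∈ Finset.range N, f (k + a) ≤ ∫ x in a..N + a, f x := by
    simpa only [add_comm a] using hmono_left.sum_le_integral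
  have hright : ∑ k ∈ Finset.range m, f (N + 2 + k + a) ≤
      ∫ x in N + a + 1..N + a + 1 + m, f x := by
    convert hanti_right.sum_le_integral using 3 with k
    push_cast
    ring
  have hpeak := add_le_integral_add_of_monotoneOn_antitoneOn hN hN' hmono_mid hanti_mid
  rw [← intervalIntegral.integral_add_adjacent_intervals (b := N + a + 1),
    ← intervalIntegral.integral_add_adjacent_intervals (b := N + a),
    Finset.sum_range_add, Finset.sum_range_succ, Finset.sum_range_succ]
  · push_cast
    rw [add_right_comm (N : ℝ) 1 a]
    linarith
  · exact MonotoneOn.intervalIntegrable (by rwa [uIcc_of_le (by simp), add_comm])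
  · exact intervalIntegrable_of_monotoneOn_antitoneOn hN hN' hmono_mid hanti_mid
  · exact intervalIntegrable_of_monotoneOn_antitoneOn (by linarith) hN' hmono hanti_mid
  · exact AntitoneOn.intervalIntegrable (by rwa [uIcc_of_le (by simp)])

theorem tsum_le_integral_add_of_monotoneOn_antitoneOn {a c : ℝ} (hac : a ≤ c)
    (hmono : MonotoneOn f (Icc a c)) (hanti : AntitoneOn f (Ici c))
    (hnonneg : ∀ x, a ≤ x → 0 ≤ f x) (hint : IntegrableOn f (Ioi a)) :
    ∑' n : ℕ, f (n + a) ≤ (∫ x in Ioi a, f x) + f c := by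
  set N := ⌊c - a⌋₊
  have hN : N + a ≤ c := by linarith [Nat.floor_le (sub_nonneg.2 hac)]
  have hN' : c ≤ N + a + 1 := by linarith [Nat.lt_floor_add_one (c - a)]
  have hterm_nonneg (k : ℕ) : 0 ≤ f (k + a) := hnonneg _ (by simp)
  refine Real.tsum_le_of_sum_range_le hterm_nonneg fun n => ?_
  calc ∑ k ∈ Finset.range n, f (k + a)
      ≤ ∑ k ∈ Finset.range (N + 2 + n), f (k + a) :=
        Finset.sum_le_sum_of_subset_of_nonneg (Finset.range_subset_range.2 (by omega))
          fun k _ _ => hterm_nonneg k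
    _ ≤ (∫ x in a..N + a + 1 + n, f x) + f c :=
        sum_range_le_integral_add_of_monotoneOn_antitoneOn hN hN' hmono hanti n
    _ ≤ (∫ x in Ioi a, f x) + f c := by
        rw [intervalIntegral.integral_of_le (by linarith)]
        refine add_le_add_left (setIntegral_mono_set hint
          (ae_restrict_of_forall_mem measurableSet_Ioi fun x hx => hnonneg x (le_of_lt hx))
          Ioc_subset_Ioi_self.eventuallyLE) _

end UnimodalSum

section Trapezoid

variable {f : ℝ → ℝ}

theorem ConvexOn.intervalIntegral_le_trapezoid {a b : ℝ} (hab : a ≤ b)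
    (hf : ConvexOn ℝ (Icc a b) f) (hint : IntervalIntegrable f volume a b) :
    ∫ x in a..b, f x ≤ (b - a) * ((f a + f b) / 2) := by
  rcases hab.eq_or_lt with rfl | hab
  · simp
  have hba : 0 < b - a := sub_pos.2 hab
  have hchord : ∀ x ∈ Icc a b, f x ≤ (b - x) / (b - a) * f a + (x - a) / (b - a) * f b := by
    intro x hx
    have hx_eq : ((b - x) / (b - a)) • a + ((x - a) / (b - a)) • b = x := by
      simp only [smul_eq_mul]; field_simp; ring
    have := hf.2 (left_mem_Icc.2 hab.le) (right_mem_Icc.2 hab.le)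
      (div_nonneg (sub_nonneg.2 hx.2) hba.le) (div_nonneg (sub_nonneg.2 hx.1) hba.le)
      (by field_simp; ring)
    rwa [hx_eq] at this
  calc ∫ x in a..b, f x ≤ ∫ x in a..b, (b - x) / (b - a) * f a + (x - a) / (b - a) * f b :=
        intervalIntegral.integral_mono_on hab.le hint
          (Continuous.intervalIntegrable (by fun_prop) _ _) hchord
    _ = (b - a) * ((f a + f b) / 2) := by
        rw [intervalIntegral.integral_add (Continuous.intervalIntegrable (by fun_prop) _ _)
          (Continuous.intervalIntegrable (by fun_prop) _ _), intervalIntegral.integral_mul_const,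
          intervalIntegral.integral_mul_const, intervalIntegral.integral_div,
          intervalIntegral.integral_div, intervalIntegral.integral_sub intervalIntegrable_const
          intervalIntegral.intervalIntegrable_id, intervalIntegral.integral_sub
          intervalIntegral.intervalIntegrable_id intervalIntegrable_const, integral_id]
        simp only [intervalIntegral.integral_const, smul_eq_mul]
        field_simp
        ring

theorem ConvexOn.integral_Ioi_add_half_le_tsum {a : ℝ} (hf : ConvexOn ℝ (Ici a) f)
    (hnonneg : ∀ x, a ≤ x → 0 ≤ f x) (hint : IntegrableOn f (Ioi a))
    (hsum : Summable fun n : ℕ => f (n + a)) :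
    (∫ x in Ioi a, f x) + f a / 2 ≤ ∑' n : ℕ, f (n + a) := by
  have hint_unit (k : ℕ) : IntervalIntegrable f volume (k + a) ((k + 1 : ℕ) + a) := by
    rw [intervalIntegrable_iff_integrableOn_Ioc_of_le (by push_cast; linarith)]
    exact hint.mono_set fun x hx => by
      simp only [mem_Ioi]; linarith [hx.1, (Nat.cast_nonneg k : (0 : ℝ) ≤ k)]
  have hpartial (N : ℕ) : ∫ x in a..N + a, f x ≤ ∑' n : ℕ, f (n + a) - f a / 2 := by
    have hsplit := intervalIntegral.sum_integral_adjacent_intervals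
      (a := fun k : ℕ => (k : ℝ) + a) (n := N) (μ := volume) (f := f) fun k _ => hint_unit k
    simp only [Nat.cast_zero, zero_add] at hsplit
    rw [← hsplit]
    calc ∑ k ∈ Finset.range N, ∫ x in k + a..(k + 1 : ℕ) + a, f x
        ≤ ∑ k ∈ Finset.range N, (f (k + a) + f ((k + 1 : ℕ) + a)) / 2 := by
          gcongr with k
          have hk := (hf.subset (Icc_subset_Ici_self.trans (Ici_subset_Ici.2 (by simp)))
            (convex_Icc _ _)).intervalIntegral_le_trapezoid (by push_cast; linarith) (hint_unit k)
          rwa [show ((k + 1 : ℕ) : ℝ) + a - (k + a) = 1 by push_cast; ring, one_mul] at hk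
      _ = (∑ k ∈ Finset.range N, f (k + a) + ∑ k ∈ Finset.range (N + 1), f (k + a) - f a) / 2 := by
          rw [Finset.sum_range_succ' _ N, ← Finset.sum_div, Finset.sum_add_distrib]
          simp only [Nat.cast_zero, zero_add]
          ring
      _ ≤ (∑' n : ℕ, f (n + a) + ∑' n : ℕ, f (n + a) - f a) / 2 := by
          gcongr <;> exact hsum.sum_le_tsum _ fun k _ => hnonneg _ (by simp)
      _ = ∑' n : ℕ, f (n + a) - f a / 2 := by ring
  have hlim := intervalIntegral_tendsto_integral_Ioi a hint
    (tendsto_atTop_add_const_right atTop a tendsto_natCast_atTop_atTop)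
  linarith [le_of_tendsto' hlim hpartial]

end Trapezoid

section Zeta

theorem convexOn_rpow_neg {s : ℝ} (hs : 0 ≤ s) : ConvexOn ℝ (Ioi 0) fun x : ℝ => x ^ (-s) := by
  refine ⟨convex_Ioi 0, fun x hx y hy p q hp hq hpq => ?_⟩
  have hxy : 0 < p • x + q • y := convex_Ioi 0 hx hy hp hq hpq
  have hlog := strictConcaveOn_log_Ioi.concaveOn.2 hx hy hp hq hpq
  simp only [smul_eq_mul] at hxy hlog ⊢
  rw [rpow_def_of_pos hxy, rpow_def_of_pos hx, rpow_def_of_pos hy]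
  calc exp (log (p * x + q * y) * -s) ≤ exp (p * (log x * -s) + q * (log y * -s)) := by
        gcongr
        nlinarith
    _ ≤ p * exp (log x * -s) + q * exp (log y * -s) := by
        simpa only [smul_eq_mul] using convexOn_exp.2 (mem_univ _) (mem_univ _) hp hq hpq

theorem riemannZeta_ofReal_re {s : ℝ} (hs : 1 < s) :
    (riemannZeta s).re = ∑' n : ℕ, ((n : ℝ) + 1) ^ (-s) := by
  rw [zeta_eq_tsum_one_div_nat_add_one_cpow (by simpa using hs)]
  have h (n : ℕ) : 1 / ((n : ℂ) + 1) ^ (s : ℂ) = ((((n : ℝ) + 1) ^ (-s) : ℝ) : ℂ) := by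
    rw [Complex.ofReal_cpow (by positivity), one_div, Complex.ofReal_neg, Complex.cpow_neg]
    push_cast
    rfl
  rw [tsum_congr h, ← Complex.ofReal_tsum, Complex.ofReal_re]

theorem one_div_sub_one_add_half_le_riemannZeta {s : ℝ} (hs : 1 < s) :
    1 / (s - 1) + 1 / 2 ≤ (riemannZeta s).re := by
  have hsum : Summable fun n : ℕ => ((n : ℝ) + 1) ^ (-s) := by
    simpa using (summable_nat_add_iff 1).2 (Real.summable_nat_rpow.2 (by linarith : -s < -1))
  have h := ConvexOn.integral_Ioi_add_half_le_tsum (a := 1) (f := fun x : ℝ => x ^ (-s))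
    ((convexOn_rpow_neg (by linarith)).subset (Ici_subset_Ioi.2 one_pos) (convex_Ici 1))
    (fun x hx => rpow_nonneg (by linarith) _) (integrableOn_Ioi_rpow_of_lt (by linarith) one_pos)
    hsum
  rw [integral_Ioi_rpow_of_lt (by linarith) one_pos, one_rpow, one_rpow] at h
  rw [riemannZeta_ofReal_re hs]
  convert h using 2
  rw [div_eq_div_iff (by linarith) (by linarith)]
  ring

end Zeta

section LogPowDivRpow

variable {i : ℕ} {s : ℝ}

theorem hasDerivAt_pow_mul_exp_neg_mul (hi : 1 ≤ i) (s u : ℝ) :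
    HasDerivAt (fun u : ℝ => u ^ i * exp (-(s * u)))
      (u ^ (i - 1) * exp (-(s * u)) * (i - s * u)) u := by
  obtain ⟨j, rfl⟩ := Nat.exists_eq_add_of_le' hi
  refine ((hasDerivAt_pow (j + 1) u).fun_mul
    ((hasDerivAt_id' u).const_mul s).fun_neg.exp).congr_deriv ?_
  rw [add_tsub_cancel_right, pow_succ]
  push_cast
  ring

theorem monotoneOn_pow_mul_exp_neg_mul (hi : 1 ≤ i) (hs : 0 < s) :
    MonotoneOn (fun u : ℝ => u ^ i * exp (-(s * u))) (Icc 0 (i / s)) := by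
  refine monotoneOn_of_hasDerivWithinAt_nonneg (convex_Icc _ _)
    (fun u _ => (hasDerivAt_pow_mul_exp_neg_mul hi s u).continuousAt.continuousWithinAt)
    (fun u _ => (hasDerivAt_pow_mul_exp_neg_mul hi s u).hasDerivWithinAt) fun u hu => ?_
  rw [interior_Icc] at hu
  have : s * u ≤ i := ((lt_div_iff₀' hs).1 hu.2).le
  have := pow_nonneg hu.1.le (i - 1)
  have := exp_pos (-(s * u))
  exact mul_nonneg (by positivity) (by linarith)

theorem antitoneOn_pow_mul_exp_neg_mul (hi : 1 ≤ i) (hs : 0 < s) :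
    AntitoneOn (fun u : ℝ => u ^ i * exp (-(s * u))) (Ici (i / s)) := by
  refine antitoneOn_of_hasDerivWithinAt_nonpos (convex_Ici _)
    (fun u _ => (hasDerivAt_pow_mul_exp_neg_mul hi s u).continuousAt.continuousWithinAt)
    (fun u _ => (hasDerivAt_pow_mul_exp_neg_mul hi s u).hasDerivWithinAt) fun u hu => ?_
  rw [interior_Ici, mem_Ioi, div_lt_iff₀' hs] at hu
  have hu0 : 0 < u := by nlinarith
  exact mul_nonpos_of_nonneg_of_nonpos (by positivity) (by linarith)

theorem log_pow_div_rpow_eq {x : ℝ} (hx : 0 < x) (i : ℕ) (s : ℝ) :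
    log x ^ i / x ^ s = log x ^ i * exp (-(s * log x)) := by
  rw [rpow_def_of_pos hx, div_eq_mul_inv, ← exp_neg, mul_comm s]

theorem monotoneOn_log_pow_div_rpow (hi : 1 ≤ i) (hs : 0 < s) :
    MonotoneOn (fun x : ℝ => log x ^ i / x ^ s) (Icc 1 (exp (i / s))) := by
  refine ((monotoneOn_pow_mul_exp_neg_mul hi hs).comp
    (strictMonoOn_log.monotoneOn.mono fun x hx => ?_) fun x hx => ?_).congr fun x hx => ?_
  · exact lt_of_lt_of_le one_pos hx.1
  · exact ⟨log_nonneg hx.1, (log_le_iff_le_exp (by linarith [hx.1])).2 hx.2⟩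
  · exact (log_pow_div_rpow_eq (by linarith [hx.1]) i s).symm

theorem antitoneOn_log_pow_div_rpow (hi : 1 ≤ i) (hs : 0 < s) :
    AntitoneOn (fun x : ℝ => log x ^ i / x ^ s) (Ici (exp (i / s))) := by
  have hpos : ∀ x ∈ Ici (exp (i / s)), 0 < x := fun x hx => (exp_pos _).trans_le hx
  refine ((antitoneOn_pow_mul_exp_neg_mul hi hs).comp_MonotoneOn
    (strictMonoOn_log.monotoneOn.mono hpos) fun x hx => ?_).congr fun x hx => ?_
  · exact (le_log_iff_exp_le (hpos x hx)).2 hx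
  · exact (log_pow_div_rpow_eq (hpos x hx) i s).symm

-- The right-hand side has the shape of the Gamma integrand in `integral_rpow_mul_exp_neg_mul_Ioi`.
theorem abs_exp_smul_log_pow_div_rpow_exp (i : ℕ) (s u : ℝ) :
    |exp u| • (log (exp u) ^ i / exp u ^ s) = u ^ ((i + 1 : ℝ) - 1) * exp (-((s - 1) * u)) := by
  rw [abs_of_pos (exp_pos u), log_exp, add_sub_cancel_right, rpow_natCast, ← exp_mul, smul_eq_mul,
    mul_div, mul_comm, mul_div_assoc, ← exp_sub]
  ring_nf

theorem integrableOn_log_pow_div_rpow (i : ℕ) (hs : 1 < s) :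
    IntegrableOn (fun x : ℝ => log x ^ i / x ^ s) (Ioi 1) := by
  rw [show Ioi (1 : ℝ) = exp '' Ioi 0 by rw [image_exp_Ioi, exp_zero],
    integrableOn_image_iff_integrableOn_abs_deriv_smul measurableSet_Ioi
      (fun x _ => (hasDerivAt_exp x).hasDerivWithinAt) exp_injective.injOn]
  refine (integrableOn_rpow_mul_exp_neg_mul_rpow (p := 1) (s := i) (b := s - 1)
    (by linarith [(Nat.cast_nonneg i : (0 : ℝ) ≤ i)]) one_pos (by linarith)).congr_fun
    (fun u _ => ?_) measurableSet_Ioi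
  dsimp only
  rw [abs_exp_smul_log_pow_div_rpow_exp, add_sub_cancel_right, rpow_one, neg_mul]

theorem integral_log_pow_div_rpow (i : ℕ) (hs : 1 < s) :
    ∫ x in Ioi 1, log x ^ i / x ^ s = i ! / (s - 1) ^ (i + 1) := by
  rw [show Ioi (1 : ℝ) = exp '' Ioi 0 by rw [image_exp_Ioi, exp_zero],
    integral_image_eq_integral_abs_deriv_smul measurableSet_Ioi
      (fun x _ => (hasDerivAt_exp x).hasDerivWithinAt) exp_injective.injOn]
  simp_rw [abs_exp_smul_log_pow_div_rpow_exp]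
  rw [integral_rpow_mul_exp_neg_mul_Ioi (by positivity) (by linarith), Gamma_nat_eq_factorial,
    ← Nat.cast_add_one, rpow_natCast, one_div, inv_pow, div_eq_inv_mul]

theorem two_mul_div_exp_one_pow_le_factorial {n : ℕ} (hn : 1 ≤ n) :
    2 * (n / exp 1) ^ n ≤ n ! := by
  refine le_trans ?_ (Stirling.le_factorial_stirling n)
  gcongr
  rw [le_sqrt zero_le_two (by positivity)]
  have : (1 : ℝ) ≤ n := by exact_mod_cast hn
  nlinarith [pi_gt_three]

theorem log_pow_div_rpow_exp_div_le (hi : 1 ≤ i) (hs : 1 < s) :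
    log (exp (i / s)) ^ i / exp (i / s) ^ s ≤ i ! / (2 * (s - 1) ^ i) := by
  have hs1 : 0 < s - 1 := by linarith
  rw [log_exp, ← exp_mul, div_mul_cancel₀ _ (by positivity : s ≠ 0)]
  calc (i / s) ^ i / exp i ≤ (i / (s - 1)) ^ i / exp i := by gcongr; linarith
    _ = 2 * (i / exp 1) ^ i / (2 * (s - 1) ^ i) := by
        rw [div_pow, div_pow, ← exp_nat_mul, mul_one]
        field_simp
    _ ≤ i ! / (2 * (s - 1) ^ i) := by gcongr; exact two_mul_div_exp_one_pow_le_factorial hi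

end LogPowDivRpow

/-- For every real `s > 1` and every integer `i ≥ 1`, one has
`∑_{k=1}^∞ (log k)^i / k^s ≤ (i! / (s−1)^i) · ζ(s)`. -/
theorem sum_log_pow_div_pow_le (s : ℝ) (hs : 1 < s) (i : ℕ) (hi : 1 ≤ i) :
    ∑' k : ℕ, (Real.log (k + 1)) ^ i / ((k : ℝ) + 1) ^ s ≤
      ((Nat.factorial i : ℝ) / (s - 1) ^ i) * (riemannZeta (s : ℂ)).re := by
  have hs0 : 0 < s := by linarith
  have hs1 : 0 < s - 1 := by linarith
  calc ∑' k : ℕ, log (k + 1) ^ i / ((k : ℝ) + 1) ^ s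
      ≤ (∫ x in Ioi 1, log x ^ i / x ^ s) + log (exp (i / s)) ^ i / exp (i / s) ^ s :=
        tsum_le_integral_add_of_monotoneOn_antitoneOn (one_le_exp (by positivity))
          (monotoneOn_log_pow_div_rpow hi hs0) (antitoneOn_log_pow_div_rpow hi hs0)
          (fun x hx => div_nonneg (pow_nonneg (log_nonneg hx) i) (by positivity))
          (integrableOn_log_pow_div_rpow i hs)
    _ ≤ i ! / (s - 1) ^ (i + 1) + i ! / (2 * (s - 1) ^ i) := by
        rw [integral_log_pow_div_rpow i hs]
        linarith [log_pow_div_rpow_exp_div_le hi hs]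
    _ = i ! / (s - 1) ^ i * (1 / (s - 1) + 1 / 2) := by
        field_simp
        ring
    _ ≤ i ! / (s - 1) ^ i * (riemannZeta s).re := by
        gcongr
        exact one_div_sub_one_add_half_le_riemannZeta hs
end

section
/- Let c₁, c₂ ∈ ℂ with c₂ ≠ 0 and 2 Re c₁ − 2|c₂| − 1 > 0. Then for every integer N ≥ 0 there exists a bounded linear map R : ℓ²(ℕ) → ℓ²(ℕ₀) of rank at most N such that ‖A − R‖ ≤ √( (2 Re c₁ − 1)(2 Re c₁) / ((2 Re c₁ − 1)² − (2|c₂|)²) ) · (2|c₂| / (2 Re c₁ − 1))^N. In particular, the (N+1)-st approximation number of A satisfies a_{N+1}(A) ≤ √( (2 Re c₁ − 1)(2 Re c₁) / ((2 Re c₁ − 1)² − (2|c₂|)²) ) · (2|c₂| / (2 Re c₁ − 1))^N. -/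
/-!
Write `s = 2 Re c₁` and `q = 2|c₂|/(s - 1) < 1`. Row `i` of the matrix has squared norm
`∑_{m ≥ 1} m^{-s} (|c₂| log m)^{2i} / (i!)²`. Since `(x^i/i!)² ≤ (2x)^{2i}/(2i)!`, this is at
most `s/(s-1) · q^{2i}` once `∑_{m ≥ 1} (log m)^k m^{-s} ≤ s · k!/(s-1)^{k+1}` is known. For the
latter write `m^{-s} = s ∫_{log m}^∞ e^{-su} du`, exchange sum and integral, and use that at most
`e^u` integers `m ≥ 1` satisfy `log m < u`; what remains is `s ∫_0^∞ u^k e^{-(s-1)u} du`.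
A matrix whose rows have summable squared norms defines an operator of norm at most the square
root of that sum. Hence removing the first `N` rows, which costs rank at most `N`, leaves an error
of norm at most `(∑_{i ≥ N} s/(s-1) · q^{2i})^{1/2}`, the claimed bound.
-/

/-- The matrix of the composition operator `C_φ`, `φ(s) = c₁ + c₂·2^{-s}`, on the
Hardy–Dirichlet space `ℋ²`, with respect to the orthonormal bases `{j^{-s}}_{j ≥ 1}`
(columns, encoded by `j : ℕ` standing for the integer `j+1 ≥ 1`) and
`{(2^i)^{-s}}_{i ≥ 0}` (rows, `i : ℕ`):
`a_{0,1} = 1`, `a_{i,1} = 0` for `i ≥ 1`, and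
`a_{i,j} = j^{-c₁}·(−c₂ log j)^i / i!` for columns `j ≥ 2`. -/
noncomputable def compMatrix (c₁ c₂ : ℂ) (i j : ℕ) : ℂ :=
  if j = 0 then (if i = 0 then 1 else 0)
  else ((j : ℂ) + 1) ^ (-c₁) * (-c₂ * (Real.log ((j : ℝ) + 1) : ℂ)) ^ i / (Nat.factorial i)

open Real MeasureTheory Set Finset
open scoped Nat ENNReal InnerProductSpace

theorem integral_pow_mul_exp_neg_mul_Ioi (k : ℕ) {c : ℝ} (hc : 0 < c) :
    ∫ u in Ioi (0 : ℝ), u ^ k * exp (-(c * u)) = k ! / c ^ (k + 1) := by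
  have h := integral_rpow_mul_exp_neg_mul_Ioi (a := k + 1) (by positivity) hc
  rw [add_sub_cancel_right, Gamma_nat_eq_factorial, ← Nat.cast_add_one, rpow_natCast] at h
  simp_rw [rpow_natCast] at h
  rw [h, one_div, inv_pow, div_eq_inv_mul]

theorem card_filter_log_add_one_lt_le_exp (F : Finset ℕ) (u : ℝ) :
    (#(F.filter fun m : ℕ => log (m + 1) < u) : ℝ) ≤ exp u := by
  have hsub : F.filter (fun m : ℕ => log (m + 1) < u) ⊆ Finset.range ⌊exp u⌋₊ := fun m hm => by
    rw [mem_filter, log_lt_iff_lt_exp (by positivity)] at hm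
    exact mem_range.mpr (Nat.le_floor (by exact_mod_cast hm.2.le))
  calc (#(F.filter fun m : ℕ => log (m + 1) < u) : ℝ) ≤ ⌊exp u⌋₊ := by
        exact_mod_cast (Finset.card_le_card hsub).trans (card_range _).le
    _ ≤ exp u := Nat.floor_le (exp_pos u).le

theorem rpow_neg_eq_mul_integral_exp {x s : ℝ} (hx : 0 < x) (hs : 0 < s) :
    x ^ (-s) = s * ∫ u in Ioi (log x), exp (-s * u) := by
  rw [integral_exp_mul_Ioi (by linarith), rpow_def_of_pos hx]
  field_simp

theorem sum_log_pow_mul_rpow_neg_le (k : ℕ) {s : ℝ} (hs : 1 < s) (F : Finset ℕ) :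
    ∑ m ∈ F, log (m + 1) ^ k * ((m : ℝ) + 1) ^ (-s) ≤ k ! * s / (s - 1) ^ (k + 1) := by
  have hs0 : 0 < s := by linarith
  set g : ℕ → ℝ → ℝ := fun m =>
    (Ioi (log (m + 1))).indicator fun u => log (m + 1) ^ k * exp (-s * u) with hg
  have hg_int : ∀ m, IntegrableOn (g m) (Ioi 0) := fun m =>
    ((integrableOn_exp_mul_Ioi (by linarith) 0).const_mul _).indicator measurableSet_Ioi
  have hterm : ∀ m : ℕ, log (m + 1) ^ k * ((m : ℝ) + 1) ^ (-s) = s * ∫ u in Ioi 0, g m u := by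
    intro m
    have hsub : Ioi (log ((m : ℝ) + 1)) ⊆ Ioi 0 := Ioi_subset_Ioi (log_nonneg (by simp))
    rw [hg, setIntegral_indicator measurableSet_Ioi, inter_eq_right.mpr hsub, integral_const_mul,
      rpow_neg_eq_mul_integral_exp (by positivity) hs0]
    ring
  have hpt : ∀ u ∈ Ioi (0 : ℝ), ∑ m ∈ F, g m u ≤ u ^ k * exp (-((s - 1) * u)) := by
    intro u (hu : 0 < u)
    calc ∑ m ∈ F, g m u
        = ∑ m ∈ F.filter (fun m : ℕ => log (m + 1) < u), log (m + 1) ^ k * exp (-s * u) := by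
          rw [sum_filter]; rfl
      _ ≤ ∑ m ∈ F.filter (fun m : ℕ => log (m + 1) < u), u ^ k * exp (-s * u) := by
          gcongr with m hm
          · exact log_nonneg (by simp)
          · exact (mem_filter.mp hm).2.le
      _ ≤ exp u * (u ^ k * exp (-s * u)) := by
          rw [sum_const, nsmul_eq_mul]
          exact mul_le_mul_of_nonneg_right (card_filter_log_add_one_lt_le_exp F u) (by positivity)
      _ = u ^ k * exp (-((s - 1) * u)) := by
          rw [mul_left_comm, ← exp_add]; ring_nf
  have hbound_int : IntegrableOn (fun u => u ^ k * exp (-((s - 1) * u))) (Ioi 0) := by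
    refine Integrable.of_integral_ne_zero ?_
    rw [integral_pow_mul_exp_neg_mul_Ioi k (by linarith)]
    positivity
  calc ∑ m ∈ F, log (m + 1) ^ k * ((m : ℝ) + 1) ^ (-s)
      = s * ∫ u in Ioi 0, ∑ m ∈ F, g m u := by
        rw [integral_finsetSum F fun m _ => hg_int m, mul_sum]
        exact sum_congr rfl fun m _ => hterm m
    _ ≤ s * ∫ u in Ioi 0, u ^ k * exp (-((s - 1) * u)) :=
        mul_le_mul_of_nonneg_left (setIntegral_mono_on
          (integrable_finsetSum F fun m _ => hg_int m) hbound_int measurableSet_Ioi hpt) hs0.le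
    _ = k ! * s / (s - 1) ^ (k + 1) := by
        rw [integral_pow_mul_exp_neg_mul_Ioi k (by linarith)]; ring

theorem sq_pow_div_factorial_le {x : ℝ} (hx : 0 ≤ x) (n : ℕ) :
    (x ^ n / n !) ^ 2 ≤ (2 * x) ^ (2 * n) / (2 * n)! := by
  have hfac : ((2 * n)! : ℝ) ≤ 4 ^ n * (n ! : ℝ) ^ 2 := by
    have h := Nat.choose_mul_factorial_mul_factorial (n := 2 * n) (k := n) (by omega)
    rw [show 2 * n - n = n by omega, ← Nat.centralBinom_eq_two_mul_choose] at h
    rw [← h, sq, ← mul_assoc]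
    exact_mod_cast Nat.mul_le_mul_right _ (Nat.mul_le_mul_right _ (Nat.centralBinom_le_four_pow n))
  calc (x ^ n / n !) ^ 2 = x ^ (2 * n) * 4 ^ n / (4 ^ n * (n ! : ℝ) ^ 2) := by
        field_simp; ring
    _ ≤ x ^ (2 * n) * 4 ^ n / (2 * n)! := by gcongr
    _ = (2 * x) ^ (2 * n) / (2 * n)! := by rw [mul_pow, pow_mul 2]; norm_num; ring

theorem hasSum_ite_mem_range_mul_geometric {r : ℝ} (hr₀ : 0 ≤ r) (hr₁ : r < 1) (c : ℝ)
    (N : ℕ) : HasSum (fun i => if i ∈ range N then 0 else c * r ^ i) (c * r ^ N / (1 - r)) := by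
  rw [← hasSum_nat_add_iff' N, sum_eq_zero fun i hi => if_pos hi, sub_zero]
  simp only [Finset.mem_range, add_lt_iff_neg_right, Nat.not_lt_zero, if_false, div_eq_mul_inv]
  exact ((hasSum_geometric_of_lt_one hr₀ hr₁).mul_left (c * r ^ N)).congr_fun fun i => by ring

theorem hasSum_ite_mem_range_geometric_bound {s b : ℝ} (hb : 0 ≤ b) (hsb : 2 * b < s - 1)
    (N : ℕ) :
    HasSum (fun i => if i ∈ range N then 0 else s / (s - 1) * ((2 * b / (s - 1)) ^ 2) ^ i)
      ((√((s - 1) * s / ((s - 1) ^ 2 - (2 * b) ^ 2)) * (2 * b / (s - 1)) ^ N) ^ 2) := by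
  have hs : 0 < s - 1 := by linarith
  have hD : 0 < (s - 1) ^ 2 - (2 * b) ^ 2 := by nlinarith
  have hq : (2 * b / (s - 1)) ^ 2 < 1 := by
    rw [div_pow, div_lt_one (by positivity)]; nlinarith
  set q := 2 * b / (s - 1)
  have h1q : 1 - q ^ 2 = ((s - 1) ^ 2 - (2 * b) ^ 2) / (s - 1) ^ 2 := by
    simp only [q]; field_simp
  have hσ : s / (s - 1) * (q ^ 2) ^ N / (1 - q ^ 2) =
      (√((s - 1) * s / ((s - 1) ^ 2 - (2 * b) ^ 2)) * q ^ N) ^ 2 := by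
    rw [h1q, mul_pow _ (q ^ N), sq_sqrt (div_nonneg (mul_nonneg hs.le (by linarith)) hD.le),
      ← pow_mul, ← pow_mul]
    field_simp
    ring
  exact hσ ▸ hasSum_ite_mem_range_mul_geometric (sq_nonneg _) hq _ N

section RowOperators

variable {𝕜 ι κ : Type*} [RCLike 𝕜]

theorem exists_clm_apply_eq_inner_of_hasSum {r : ι → lp (fun _ : κ => 𝕜) 2} {C : ι → ℝ} {σ : ℝ}
    (hr : ∀ i, ‖r i‖ ^ 2 ≤ C i) (hC : HasSum C σ) :
    ∃ T : lp (fun _ : κ => 𝕜) 2 →L[𝕜] lp (fun _ : ι => 𝕜) 2,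
      (∀ x i, T x i = ⟪r i, x⟫_𝕜) ∧ ‖T‖ ≤ √σ := by
  have hC0 : ∀ i, 0 ≤ C i := fun i => (sq_nonneg _).trans (hr i)
  have hσ : 0 ≤ σ := hC.nonneg hC0
  have hsum : ∀ x (F : Finset ι),
      ∑ i ∈ F, ‖⟪r i, x⟫_𝕜‖ ^ (2 : ℝ≥0∞).toReal ≤ (√σ * ‖x‖) ^ (2 : ℝ≥0∞).toReal := by
    intro x F
    simp only [ENNReal.toReal_ofNat, rpow_two]
    calc ∑ i ∈ F, ‖⟪r i, x⟫_𝕜‖ ^ 2 ≤ ∑ i ∈ F, C i * ‖x‖ ^ 2 := by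
          gcongr with i
          calc ‖⟪r i, x⟫_𝕜‖ ^ 2 ≤ (‖r i‖ * ‖x‖) ^ 2 := by gcongr; exact norm_inner_le_norm _ _
            _ ≤ C i * ‖x‖ ^ 2 := by rw [mul_pow]; gcongr; exact hr i
      _ ≤ σ * ‖x‖ ^ 2 := by
          rw [← sum_mul]; gcongr; exact sum_le_hasSum F (fun i _ => hC0 i) hC
      _ = (√σ * ‖x‖) ^ 2 := by rw [mul_pow, sq_sqrt hσ]
  let L : lp (fun _ : κ => 𝕜) 2 →ₗ[𝕜] lp (fun _ : ι => 𝕜) 2 :=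
    { toFun := fun x => ⟨fun i => ⟪r i, x⟫_𝕜, memℓp_gen' (hsum x)⟩
      map_add' := fun x y => lp.ext <| funext fun i => inner_add_right _ _ _
      map_smul' := fun c x => lp.ext <| funext fun i => inner_smul_right _ _ _ }
  have hL : ∀ x, ‖L x‖ ≤ √σ * ‖x‖ := fun x =>
    lp.norm_le_of_forall_sum_le (by norm_num) (by positivity) (hsum x)
  exact ⟨L.mkContinuous _ hL, fun x i => rfl, L.mkContinuous_norm_le (sqrt_nonneg σ) hL⟩

theorem exists_clm_apply_eq_tsum_mul_of_hasSum {a : ι → κ → 𝕜} {C : ι → ℝ} {σ : ℝ}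
    (ha : ∀ i (F : Finset κ), ∑ j ∈ F, ‖a i j‖ ^ 2 ≤ C i) (hC : HasSum C σ) :
    ∃ T : lp (fun _ : κ => 𝕜) 2 →L[𝕜] lp (fun _ : ι => 𝕜) 2,
      (∀ x i, T x i = ∑' j, a i j * x j) ∧ ‖T‖ ≤ √σ := by
  have hC0 : ∀ i, 0 ≤ C i := fun i => by simpa using ha i ∅
  have hsum : ∀ i (F : Finset κ),
      ∑ j ∈ F, ‖starRingEnd 𝕜 (a i j)‖ ^ (2 : ℝ≥0∞).toReal ≤ √(C i) ^ (2 : ℝ≥0∞).toReal :=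
    fun i F => by simpa [rpow_two, sq_sqrt (hC0 i)] using ha i F
  let r : ι → lp (fun _ : κ => 𝕜) 2 := fun i =>
    ⟨fun j => starRingEnd 𝕜 (a i j), memℓp_gen' (hsum i)⟩
  have hr : ∀ i, ‖r i‖ ^ 2 ≤ C i := fun i => by
    simpa [sq_sqrt (hC0 i)] using pow_le_pow_left₀ (norm_nonneg _)
      (lp.norm_le_of_forall_sum_le (f := r i) (by norm_num) (sqrt_nonneg _) (hsum i)) 2
  obtain ⟨T, hT, hnorm⟩ := exists_clm_apply_eq_inner_of_hasSum hr hC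
  refine ⟨T, fun x i => ?_, hnorm⟩
  rw [hT, lp.inner_eq_tsum]
  congr 1 with j
  simp [r, mul_comm]

theorem rank_le_card_of_forall_notMem_apply_eq_zero {E : Type*} [AddCommGroup E] [Module 𝕜 E]
    (f : E →ₗ[𝕜] lp (fun _ : ι => 𝕜) 2) (s : Finset ι) (hf : ∀ x, ∀ i ∉ s, f x i = 0) :
    f.rank ≤ #s := by
  classical
  have hrange :
      LinearMap.range f ≤ Submodule.span 𝕜 (s.image fun i => lp.single 2 i (1 : 𝕜)) := by
    rintro _ ⟨x, rfl⟩
    have hx : f x = ∑ i ∈ s, f x i • lp.single 2 i (1 : 𝕜) := by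
      ext j
      simp only [lp.coeFn_sum, Finset.sum_apply, lp.coeFn_smul, Pi.smul_apply, lp.coeFn_single,
        Pi.single_apply, smul_eq_mul, mul_ite, mul_one, mul_zero]
      by_cases hj : j ∈ s <;> simp [hj, hf x j]
    rw [hx]
    exact Submodule.sum_mem _ fun i hi =>
      Submodule.smul_mem _ _ (Submodule.subset_span (mem_image_of_mem _ hi))
  calc f.rank ≤ _ := Submodule.rank_mono hrange
    _ ≤ #(s.image fun i => lp.single 2 i (1 : 𝕜)) := rank_span_finset_le _
    _ ≤ #s := by exact_mod_cast card_image_le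

theorem exists_rank_le_norm_sub_le_of_hasSum [DecidableEq ι] {a : ι → κ → 𝕜} {C : ι → ℝ}
    {T : lp (fun _ : κ => 𝕜) 2 →L[𝕜] lp (fun _ : ι => 𝕜) 2}
    (hT : ∀ x i, T x i = ∑' j, a i j * x j) (ha : ∀ i (F : Finset κ), ∑ j ∈ F, ‖a i j‖ ^ 2 ≤ C i)
    (s : Finset ι) {σ : ℝ} (hσ : HasSum (fun i => if i ∈ s then 0 else C i) σ) :
    ∃ R : lp (fun _ : κ => 𝕜) 2 →L[𝕜] lp (fun _ : ι => 𝕜) 2,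
      (R : lp (fun _ : κ => 𝕜) 2 →ₗ[𝕜] lp (fun _ : ι => 𝕜) 2).rank ≤ #s ∧ ‖T - R‖ ≤ √σ := by
  obtain ⟨S, hS, hSnorm⟩ := exists_clm_apply_eq_tsum_mul_of_hasSum
    (a := fun i j => if i ∈ s then 0 else a i j) (fun i F => by split_ifs <;> simp [ha i F]) hσ
  refine ⟨T - S, rank_le_card_of_forall_notMem_apply_eq_zero _ s fun x i hi => ?_, ?_⟩
  · simp [hT, hS, hi]
  · rwa [sub_sub_cancel]

end RowOperators

theorem norm_compMatrix (c₁ c₂ : ℂ) (i j : ℕ) :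
    ‖compMatrix c₁ c₂ i j‖ = ((j : ℝ) + 1) ^ (-c₁.re) * (‖c₂‖ * log (j + 1)) ^ i / i ! := by
  rcases eq_or_ne j 0 with rfl | hj
  · rcases eq_or_ne i 0 with rfl | hi <;> simp [compMatrix, *]
  · have hcast : ((j : ℂ) + 1) = (((j : ℝ) + 1 : ℝ) : ℂ) := by push_cast; rfl
    rw [compMatrix, if_neg hj, norm_div, norm_mul, norm_pow, norm_mul, norm_neg, hcast,
      Complex.norm_cpow_eq_rpow_re_of_pos (by positivity), Complex.neg_re, Complex.norm_real,
      norm_of_nonneg (log_nonneg (by simp)), Complex.norm_natCast]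

theorem sum_norm_compMatrix_sq_le {c₁ : ℂ} (c₂ : ℂ) (hc₁ : 1 < 2 * c₁.re) (i : ℕ)
    (F : Finset ℕ) :
    ∑ j ∈ F, ‖compMatrix c₁ c₂ i j‖ ^ 2 ≤
      2 * c₁.re / (2 * c₁.re - 1) * ((2 * ‖c₂‖ / (2 * c₁.re - 1)) ^ 2) ^ i := by
  set s := 2 * c₁.re
  have hterm : ∀ j : ℕ, ‖compMatrix c₁ c₂ i j‖ ^ 2 ≤
      (2 * ‖c₂‖) ^ (2 * i) / (2 * i)! * (log (j + 1) ^ (2 * i) * ((j : ℝ) + 1) ^ (-s)) := by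
    intro j
    rw [norm_compMatrix, mul_div_assoc, mul_pow, ← rpow_mul_natCast (by positivity),
      show -c₁.re * (2 : ℕ) = -s by push_cast; ring]
    calc ((j : ℝ) + 1) ^ (-s) * ((‖c₂‖ * log (j + 1)) ^ i / i !) ^ 2
        ≤ ((j : ℝ) + 1) ^ (-s) * ((2 * (‖c₂‖ * log (j + 1))) ^ (2 * i) / (2 * i)!) := by
          gcongr
          exact sq_pow_div_factorial_le (mul_nonneg (norm_nonneg _) (log_nonneg (by simp))) i
      _ = _ := by ring
  calc ∑ j ∈ F, ‖compMatrix c₁ c₂ i j‖ ^ 2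
      ≤ ∑ j ∈ F, (2 * ‖c₂‖) ^ (2 * i) / (2 * i)! * (log (j + 1) ^ (2 * i) * ((j : ℝ) + 1) ^ (-s)) :=
        sum_le_sum fun j _ => hterm j
    _ = (2 * ‖c₂‖) ^ (2 * i) / (2 * i)! * ∑ j ∈ F, log (j + 1) ^ (2 * i) * ((j : ℝ) + 1) ^ (-s) :=
        (mul_sum _ _ _).symm
    _ ≤ (2 * ‖c₂‖) ^ (2 * i) / (2 * i)! * ((2 * i)! * s / (s - 1) ^ (2 * i + 1)) := by
        gcongr; exact sum_log_pow_mul_rpow_neg_le _ hc₁ F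
    _ = s / (s - 1) * ((2 * ‖c₂‖ / (s - 1)) ^ 2) ^ i := by
        have : s - 1 ≠ 0 := by linarith
        rw [← pow_mul, div_pow, pow_succ]
        field_simp

theorem approximation_numbers_comp_operator_general (c₁ c₂ : ℂ)
    (hcompact : 0 < 2 * c₁.re - 2 * ‖c₂‖ - 1) :
    ∃ T : lp (fun _ : ℕ => ℂ) 2 →L[ℂ] lp (fun _ : ℕ => ℂ) 2,
      (∀ (x : lp (fun _ : ℕ => ℂ) 2) (i : ℕ), T x i = ∑' j : ℕ, compMatrix c₁ c₂ i j * x j) ∧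
      ∀ N : ℕ,
        (∃ R : lp (fun _ : ℕ => ℂ) 2 →L[ℂ] lp (fun _ : ℕ => ℂ) 2,
          LinearMap.rank (R : lp (fun _ : ℕ => ℂ) 2 →ₗ[ℂ] lp (fun _ : ℕ => ℂ) 2) ≤ N ∧
          ‖T - R‖ ≤ Real.sqrt ((2 * c₁.re - 1) * (2 * c₁.re) /
              ((2 * c₁.re - 1) ^ 2 - (2 * ‖c₂‖) ^ 2)) *
            (2 * ‖c₂‖ / (2 * c₁.re - 1)) ^ N) ∧
        sInf {d : ℝ | ∃ R : lp (fun _ : ℕ => ℂ) 2 →L[ℂ] lp (fun _ : ℕ => ℂ) 2,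
            LinearMap.rank (R : lp (fun _ : ℕ => ℂ) 2 →ₗ[ℂ] lp (fun _ : ℕ => ℂ) 2) < N + 1 ∧
            d = ‖T - R‖} ≤
          Real.sqrt ((2 * c₁.re - 1) * (2 * c₁.re) /
              ((2 * c₁.re - 1) ^ 2 - (2 * ‖c₂‖) ^ 2)) *
            (2 * ‖c₂‖ / (2 * c₁.re - 1)) ^ N := by
  have hs : 1 < 2 * c₁.re := by linarith [norm_nonneg c₂]
  have hq : 0 ≤ 2 * ‖c₂‖ / (2 * c₁.re - 1) := div_nonneg (by positivity) (by linarith)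
  have hrow := sum_norm_compMatrix_sq_le c₂ hs
  have htail := hasSum_ite_mem_range_geometric_bound (s := 2 * c₁.re) (norm_nonneg c₂)
    (by linarith)
  obtain ⟨T, hT, -⟩ := exists_clm_apply_eq_tsum_mul_of_hasSum hrow
    (by simpa only [range_zero, Finset.notMem_empty, if_false] using htail 0)
  refine ⟨T, hT, fun N => ?_⟩
  obtain ⟨R, hrank, hnorm⟩ := exists_rank_le_norm_sub_le_of_hasSum hT hrow (range N) (htail N)
  rw [card_range] at hrank
  rw [sqrt_sq (mul_nonneg (sqrt_nonneg _) (pow_nonneg hq N))] at hnorm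
  refine ⟨⟨R, hrank, hnorm⟩, le_trans (csInf_le ?_ ⟨R, hrank.trans_lt ?_, rfl⟩) hnorm⟩
  · exact ⟨0, by rintro _ ⟨R', -, rfl⟩; exact norm_nonneg _⟩
  · exact_mod_cast N.lt_succ_self

/-- Let `φ(s) = c₁ + c₂ 2^{-s}` with `c₂ ≠ 0` and `2 Re c₁ − 2|c₂| − 1 > 0`.
Then the matrix of `C_φ` defines a bounded linear map `T : ℓ²(ℕ) → ℓ²(ℕ₀)`, and for
every integer `N ≥ 0` there is a bounded linear map `R` of rank at most `N` with
`‖T − R‖ ≤ √((2 Re c₁ − 1)(2 Re c₁) / ((2 Re c₁ − 1)² − (2|c₂|)²)) · (2|c₂|/(2 Re c₁ − 1))^N`;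
in particular the `(N+1)`-st approximation number of `T` (the distance from `T` to the
operators of rank `< N + 1`) is bounded by the same quantity. -/
theorem approximation_numbers_comp_operator (c₁ c₂ : ℂ) (hc₂ : c₂ ≠ 0)
    (hcompact : 0 < 2 * c₁.re - 2 * ‖c₂‖ - 1) :
    ∃ T : lp (fun _ : ℕ => ℂ) 2 →L[ℂ] lp (fun _ : ℕ => ℂ) 2,
      (∀ (x : lp (fun _ : ℕ => ℂ) 2) (i : ℕ), T x i = ∑' j : ℕ, compMatrix c₁ c₂ i j * x j) ∧
      ∀ N : ℕ,
        (∃ R : lp (fun _ : ℕ => ℂ) 2 →L[ℂ] lp (fun _ : ℕ => ℂ) 2,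
          LinearMap.rank (R : lp (fun _ : ℕ => ℂ) 2 →ₗ[ℂ] lp (fun _ : ℕ => ℂ) 2) ≤ N ∧
          ‖T - R‖ ≤ Real.sqrt ((2 * c₁.re - 1) * (2 * c₁.re) /
              ((2 * c₁.re - 1) ^ 2 - (2 * ‖c₂‖) ^ 2)) *
            (2 * ‖c₂‖ / (2 * c₁.re - 1)) ^ N) ∧
        sInf {d : ℝ | ∃ R : lp (fun _ : ℕ => ℂ) 2 →L[ℂ] lp (fun _ : ℕ => ℂ) 2,
            LinearMap.rank (R : lp (fun _ : ℕ => ℂ) 2 →ₗ[ℂ] lp (fun _ : ℕ => ℂ) 2) < N + 1 ∧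
            d = ‖T - R‖} ≤
          Real.sqrt ((2 * c₁.re - 1) * (2 * c₁.re) /
              ((2 * c₁.re - 1) ^ 2 - (2 * ‖c₂‖) ^ 2)) *
            (2 * ‖c₂‖ / (2 * c₁.re - 1)) ^ N :=
  approximation_numbers_comp_operator_general c₁ c₂ hcompact
end
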